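/- Assume k is nonincreasing on [0,∞), k(diam X) > 0, and Σ_{x ∈ X} m(x) = 1. Fix i ∈ X and let B₀ = B(i, min_{z ≠ i} d(i,z)) be the smallest ball containing i with at least two elements. Then the improper integral ∫₀^∞ ( (exp(tL))_{i,i}/m(i) − 1 ) dt converges and equals −(1/λ(B₀))·( 1/m(i) − 1/m(B₀) ) + Σ_T (−1/λ(T⁺))·( 1/m(T) − 1/m(T⁺) ), where the sum ranges over all balls T of X with B₀ ⊆ T ⊊ X. (The CTMC centrality of i is the reciprocal of this quantity.) -/

import Mathlib

open scoped Classical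
open Finset

/-- Closed ball of radius `r` around `x`, as a finset. -/
noncomputable def uball {X : Type*} [Fintype X] (d : X → X → ℝ) (x : X) (r : ℝ) : Finset X :=
  Finset.univ.filter fun y => d x y ≤ r

/-- A ball of the ultrametric space: a closed ball of nonnegative radius. -/
def IsBall {X : Type*} [Fintype X] (d : X → X → ℝ) (B : Finset X) : Prop :=
  ∃ x r, 0 ≤ r ∧ B = uball d x r

/-- Diameter of a finite set: maximum of `d` over `B × B` (`0` if `B` is empty). -/
noncomputable def fdiam {X : Type*} [Fintype X] (d : X → X → ℝ) (B : Finset X) : ℝ :=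
  if h : (B ×ˢ B).Nonempty then (B ×ˢ B).sup' h fun p => d p.1 p.2 else 0

/-- Mass of a set: `m(B) = Σ_{x ∈ B} m(x)`. -/
noncomputable def mass {X : Type*} [Fintype X] (m : X → ℝ) (B : Finset X) : ℝ :=
  ∑ x ∈ B, m x

/-- The eigenvalue attached to a ball `B`, computed from a base point `x₀ ∈ B`:
`λ(B) = −(Σ_{y ∉ B} k(d(x₀,y))·m(y) + k(diam B)·m(B))`. -/
noncomputable def lamB {X : Type*} [Fintype X] [DecidableEq X]
    (d : X → X → ℝ) (k : ℝ → ℝ) (m : X → ℝ) (B : Finset X) (x₀ : X) : ℝ :=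
  -((∑ y ∈ Bᶜ, k (d x₀ y) * m y) + k (fdiam d B) * mass m B)

/-- The parent radius of a ball `B ⊊ X` seen from `x ∈ B`: `r⁺ = min{d(x,y) : y ∉ B}`. -/
noncomputable def parentR {X : Type*} [Fintype X] [DecidableEq X]
    (d : X → X → ℝ) (B : Finset X) (x : X) : ℝ :=
  if h : (Bᶜ : Finset X).Nonempty then Bᶜ.inf' h fun y => d x y else 0

/-- The parent ball `B⁺ = B(x, r⁺)` of `B ⊊ X`, computed from a base point `x ∈ B`. -/
noncomputable def parentB {X : Type*} [Fintype X] [DecidableEq X]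
    (d : X → X → ℝ) (B : Finset X) (x : X) : Finset X :=
  uball d x (parentR d B x)

/-- The ultrametric Laplacian matrix:
`L x y = k(d(x,y))·m(y)` off the diagonal and `L x x = −Σ_{z ≠ x} k(d(x,z))·m(z)`. -/
noncomputable def ultraLap {X : Type*} [Fintype X] [DecidableEq X]
    (d : X → X → ℝ) (k : ℝ → ℝ) (m : X → ℝ) : Matrix X X ℝ :=
  fun x y => if y = x then -(∑ z ∈ ({x}ᶜ : Finset X), k (d x z) * m z) else k (d x y) * m y

/-- The smallest ball containing `x` and `y` and having at least two elements:
`B(x, d(x,y))` for `x ≠ y`, and `B(x, min_{z ≠ x} d(x,z))` for `x = y`. -/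
noncomputable def sball {X : Type*} [Fintype X] [DecidableEq X]
    (d : X → X → ℝ) (x y : X) : Finset X :=
  if x = y then
    (if h : (({x}ᶜ : Finset X)).Nonempty then
      uball d x ((({x}ᶜ : Finset X)).inf' h fun z => d x z)
     else uball d x 0)
  else uball d x (d x y)

/-!
For a ball `T ∋ i` with `T ≠ X`, the function `f_T = 1_T / m(T) - 1_{T⁺} / m(T⁺)` is an
eigenvector of `L` with eigenvalue `λ(T⁺)`: by the isosceles property of ultrametrics,
`d(x, y) = d(i, y)` whenever a ball contains `x` and `i` but not `y`, so `L f_T` can be computed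
separately on `T`, on `T⁺ \ T` and off `T⁺`. The balls through `i` form a chain
`{i} ⊊ B₀ ⊊ ⋯ ⊊ X` which `T ↦ T⁺` shifts by one step, so `1_{i} / m(i)` telescopes into the
`f_T` plus the constant `1_X / m(X) = 1`, which `L` kills. Hence
`exp(tL)ᵢᵢ / m(i) - 1 = ∑_T (1/m(T) - 1/m(T⁺)) e^{λ(T⁺) t}` with all `λ(T⁺) < 0`, and integrating
termwise gives the formula; the term `T = {i}` is the one with `T⁺ = B₀`.
-/

open Matrix

structure IsUltrametric {X : Type*} (d : X → X → ℝ) : Prop where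
  eq_zero_iff : ∀ x y, d x y = 0 ↔ x = y
  symm : ∀ x y, d x y = d y x
  le_max : ∀ x y z, d x z ≤ max (d x y) (d y z)

namespace IsUltrametric

variable {X : Type*} {d : X → X → ℝ} (hd : IsUltrametric d)
include hd

lemma dist_self (x : X) : d x x = 0 := (hd.eq_zero_iff x x).2 rfl

lemma dist_nonneg (x y : X) : 0 ≤ d x y := by
  have h := hd.le_max x y x
  rwa [hd.dist_self, hd.symm y x, max_self] at h

lemma dist_eq_of_lt {x y z : X} (h : d x y < d x z) : d y z = d x z := by
  have hle : d y z ≤ d x z := by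
    have := hd.le_max y x z
    rw [hd.symm y x] at this
    exact this.trans (max_le h.le le_rfl)
  exact hle.antisymm (not_lt.1 fun hlt => (hd.le_max x y z).not_gt (max_lt h hlt))

end IsUltrametric

section Balls

variable {X : Type*} [Fintype X] {d : X → X → ℝ}

@[simp]
lemma mem_uball {x y : X} {r : ℝ} : y ∈ uball d x r ↔ d x y ≤ r := by
  simp [uball]

lemma uball_subset_uball {x : X} {r s : ℝ} (h : r ≤ s) : uball d x r ⊆ uball d x s :=
  fun _ hy => mem_uball.2 ((mem_uball.1 hy).trans h)

lemma le_fdiam {B : Finset X} {p q : X} (hp : p ∈ B) (hq : q ∈ B) : d p q ≤ fdiam d B := by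
  have hmem : (p, q) ∈ B ×ˢ B := mem_product.2 ⟨hp, hq⟩
  rw [fdiam, dif_pos ⟨_, hmem⟩]
  exact le_sup' (fun p : X × X => d p.1 p.2) hmem

lemma fdiam_le {B : Finset X} {r : ℝ} (hr : 0 ≤ r) (h : ∀ p ∈ B, ∀ q ∈ B, d p q ≤ r) :
    fdiam d B ≤ r := by
  unfold fdiam
  split_ifs
  · exact sup'_le _ _ fun p hp => h _ (mem_product.1 hp).1 _ (mem_product.1 hp).2
  · exact hr

lemma mass_pos {m : X → ℝ} (hm : ∀ x, 0 < m x) {B : Finset X} {i : X} (hi : i ∈ B) :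
    0 < mass m B :=
  sum_pos (fun y _ => hm y) ⟨i, hi⟩

namespace IsUltrametric

variable (hd : IsUltrametric d)
include hd

lemma fdiam_nonneg (B : Finset X) : 0 ≤ fdiam d B := by
  unfold fdiam
  split_ifs with hne
  · obtain ⟨⟨p, q⟩, hpq⟩ := hne
    exact (hd.dist_nonneg p q).trans (le_sup' (fun p : X × X => d p.1 p.2) hpq)
  · exact le_rfl

lemma fdiam_mono {A B : Finset X} (h : A ⊆ B) : fdiam d A ≤ fdiam d B :=
  fdiam_le (hd.fdiam_nonneg B) fun _ hp _ hq => le_fdiam (h hp) (h hq)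

lemma fdiam_uball_le (x : X) {r : ℝ} (hr : 0 ≤ r) : fdiam d (uball d x r) ≤ r :=
  fdiam_le hr fun p hp q hq =>
    (hd.le_max p x q).trans (max_le (hd.symm p x ▸ mem_uball.1 hp) (mem_uball.1 hq))

lemma eq_uball_fdiam {B : Finset X} (hB : IsBall d B) {x : X} (hx : x ∈ B) :
    B = uball d x (fdiam d B) := by
  obtain ⟨c, r, hr, rfl⟩ := hB
  refine Subset.antisymm (fun y hy => mem_uball.2 (le_fdiam hx hy)) fun y hy => mem_uball.2 ?_
  exact (hd.le_max c x y).trans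
    (max_le (mem_uball.1 hx) ((mem_uball.1 hy).trans (hd.fdiam_uball_le c hr)))

lemma fdiam_lt_dist {B : Finset X} (hB : IsBall d B) {x y : X} (hx : x ∈ B) (hy : y ∉ B) :
    fdiam d B < d x y := by
  rw [hd.eq_uball_fdiam hB hx, mem_uball, not_le] at hy
  exact hy

lemma dist_eq_of_mem_of_notMem {B : Finset X} (hB : IsBall d B) {x p y : X} (hx : x ∈ B)
    (hp : p ∈ B) (hy : y ∉ B) : d p y = d x y :=
  hd.dist_eq_of_lt ((le_fdiam hx hp).trans_lt (hd.fdiam_lt_dist hB hx hy))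

lemma subset_or_subset {A B : Finset X} (hA : IsBall d A) (hB : IsBall d B) {x : X}
    (hxA : x ∈ A) (hxB : x ∈ B) : A ⊆ B ∨ B ⊆ A := by
  rw [hd.eq_uball_fdiam hA hxA, hd.eq_uball_fdiam hB hxB]
  exact (le_total _ _).imp uball_subset_uball uball_subset_uball

lemma isBall_singleton (x : X) : IsBall d {x} := by
  refine ⟨x, 0, le_rfl, ext fun y => ?_⟩
  rw [mem_singleton, mem_uball, eq_comm, ← hd.eq_zero_iff]
  exact ⟨fun h => h.le, fun h => h.antisymm (hd.dist_nonneg x y)⟩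

lemma isBall_univ (x : X) : IsBall d univ :=
  ⟨x, fdiam d univ, hd.fdiam_nonneg univ,
    (ext fun y => by simp [le_fdiam (mem_univ x) (mem_univ y)])⟩

end IsUltrametric

end Balls

section Parent

variable {X : Type*} [Fintype X] [DecidableEq X] {d : X → X → ℝ} {B : Finset X} {i : X}

@[simp]
lemma mem_parentB {y : X} : y ∈ parentB d B i ↔ d i y ≤ parentR d B i := mem_uball

lemma parentR_le_dist {y : X} (hy : y ∉ B) : parentR d B i ≤ d i y := by
  have hc : (Bᶜ : Finset X).Nonempty := ⟨y, mem_compl.2 hy⟩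
  rw [parentR, dif_pos hc]
  exact inf'_le _ (mem_compl.2 hy)

lemma exists_dist_eq_parentR (hBu : B ≠ univ) : ∃ y ∉ B, d i y = parentR d B i := by
  have hc : (Bᶜ : Finset X).Nonempty := by
    rwa [nonempty_iff_ne_empty, Ne, compl_eq_empty_iff]
  obtain ⟨y, hy, hval⟩ := exists_mem_eq_inf' hc fun y => d i y
  exact ⟨y, mem_compl.1 hy, by rw [parentR, dif_pos hc, hval]⟩

namespace IsUltrametric

variable (hd : IsUltrametric d)
include hd

lemma isBall_parentB (hBu : B ≠ univ) : IsBall d (parentB d B i) := by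
  obtain ⟨y, -, hy⟩ := exists_dist_eq_parentR (d := d) (i := i) hBu
  exact ⟨i, _, hy ▸ hd.dist_nonneg i y, rfl⟩

lemma parentB_subset (hi : i ∈ B) {T : Finset X} (hT : IsBall d T) (hBT : B ⊂ T) :
    parentB d B i ⊆ T := by
  obtain ⟨q, hqT, hqB⟩ := exists_of_ssubset hBT
  intro y hy
  rw [hd.eq_uball_fdiam hT (hBT.subset hi), mem_uball]
  exact (mem_parentB.1 hy).trans ((parentR_le_dist hqB).trans (le_fdiam (hBT.subset hi) hqT))

variable (hB : IsBall d B) (hi : i ∈ B)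
include hB hi

lemma fdiam_lt_parentR (hBu : B ≠ univ) : fdiam d B < parentR d B i := by
  obtain ⟨y, hyB, hy⟩ := exists_dist_eq_parentR (d := d) (i := i) hBu
  exact hy ▸ hd.fdiam_lt_dist hB hi hyB

lemma ssubset_parentB (hBu : B ≠ univ) : B ⊂ parentB d B i := by
  obtain ⟨y, hyB, hy⟩ := exists_dist_eq_parentR (d := d) (i := i) hBu
  refine ssubset_of_subset_not_subset (fun p hp => ?_) fun h => hyB (h (mem_parentB.2 hy.le))
  exact mem_parentB.2 ((le_fdiam hi hp).trans (hd.fdiam_lt_parentR hB hi hBu).le)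

lemma mem_parentB_self (hBu : B ≠ univ) : i ∈ parentB d B i :=
  (hd.ssubset_parentB hB hi hBu).subset hi

lemma fdiam_parentB (hBu : B ≠ univ) : fdiam d (parentB d B i) = parentR d B i := by
  obtain ⟨y, -, hy⟩ := exists_dist_eq_parentR (d := d) (i := i) hBu
  refine (hd.fdiam_uball_le i (hy ▸ hd.dist_nonneg i y)).antisymm
    (hy.symm.trans_le (le_fdiam ?_ ?_))
  · exact hd.mem_parentB_self hB hi hBu
  · exact mem_parentB.2 hy.le

lemma dist_eq_parentR {p q : X} (hp : p ∈ B) (hq : q ∈ parentB d B i) (hqB : q ∉ B) :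
    d p q = parentR d B i := by
  rw [hd.dist_eq_of_mem_of_notMem hB hi hp hqB]
  exact (mem_parentB.1 hq).antisymm (parentR_le_dist hqB)

end IsUltrametric

end Parent

section Chain

variable {X : Type*} [Fintype X] [DecidableEq X] {d : X → X → ℝ} {i : X}

noncomputable def ballsThrough (d : X → X → ℝ) (i : X) : Finset (Finset X) :=
  univ.filter fun T => IsBall d T ∧ i ∈ T

@[simp]
lemma mem_ballsThrough {T : Finset X} : T ∈ ballsThrough d i ↔ IsBall d T ∧ i ∈ T := by
  simp [ballsThrough]

lemma sball_self_eq_parentB : sball d i i = parentB d {i} i := by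
  simp only [sball, if_true, parentB, parentR]
  split_ifs <;> rfl

namespace IsUltrametric

variable (hd : IsUltrametric d)
include hd

lemma parentB_injOn : Set.InjOn (fun T => parentB d T i) ((ballsThrough d i).erase univ) := by
  have key : ∀ A ∈ (ballsThrough d i).erase univ, ∀ B ∈ (ballsThrough d i).erase univ,
      A ⊂ B → parentB d A i ≠ parentB d B i := by
    intro A hA B hB hAB h
    simp only [mem_erase, mem_ballsThrough] at hA hB
    exact (hd.ssubset_parentB hB.2.1 hB.2.2 hB.1).not_subset
      (h ▸ hd.parentB_subset hA.2.2 hB.2.1 hAB)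
  intro A hA B hB h
  have hA' := mem_ballsThrough.1 (mem_of_mem_erase hA)
  have hB' := mem_ballsThrough.1 (mem_of_mem_erase hB)
  by_contra hne
  rcases hd.subset_or_subset hA'.1 hB'.1 hA'.2 hB'.2 with hAB | hBA
  · exact key A hA B hB (ssubset_of_subset_of_ne hAB hne) h
  · exact key B hB A hA (ssubset_of_subset_of_ne hBA (Ne.symm hne)) h.symm

lemma exists_parentB_eq {B : Finset X} (hB : IsBall d B) (hi : i ∈ B) (hBi : B ≠ {i}) :
    ∃ T ∈ (ballsThrough d i).erase univ, parentB d T i = B := by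
  -- a largest ball through `i` strictly inside `B` has parent `B`
  set C := (ballsThrough d i).filter (· ⊂ B)
  have hiC : {i} ∈ C := by
    simp only [C, mem_filter, mem_ballsThrough, mem_singleton_self, and_true]
    exact ⟨hd.isBall_singleton i, ssubset_of_subset_of_ne (singleton_subset_iff.2 hi) hBi.symm⟩
  obtain ⟨T, hTC, hmax⟩ := C.exists_max_image card ⟨_, hiC⟩
  obtain ⟨⟨hT, hiT⟩, hTB⟩ : (IsBall d T ∧ i ∈ T) ∧ T ⊂ B := by simpa [C] using hTC
  have hTu : T ≠ univ := fun h => (h ▸ hTB).not_subset (subset_univ B)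
  refine ⟨T, mem_erase.2 ⟨hTu, mem_ballsThrough.2 ⟨hT, hiT⟩⟩, ?_⟩
  by_contra hne
  have hPC : parentB d T i ∈ C := by
    simp only [C, mem_filter, mem_ballsThrough]
    exact ⟨⟨hd.isBall_parentB hTu, hd.mem_parentB_self hT hiT hTu⟩,
      ssubset_of_subset_of_ne (hd.parentB_subset hiT hB hTB) hne⟩
  exact (card_lt_card (hd.ssubset_parentB hT hiT hTu)).not_ge (hmax _ hPC)

lemma sum_sub_parentB {M : Type*} [AddCommGroup M] (G : Finset X → M) :
    ∑ T ∈ (ballsThrough d i).erase univ, (G T - G (parentB d T i)) = G {i} - G univ := by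
  have hparent : ∑ T ∈ (ballsThrough d i).erase univ, G (parentB d T i)
      = ∑ T ∈ (ballsThrough d i).erase {i}, G T := by
    refine sum_nbij (fun T => parentB d T i) (fun T hT => ?_) hd.parentB_injOn
      (fun B hB => ?_) fun _ _ => rfl
    · obtain ⟨hTu, hT, hiT⟩ : T ≠ univ ∧ IsBall d T ∧ i ∈ T := by simpa using hT
      have hTP := hd.ssubset_parentB hT hiT hTu
      refine mem_erase.2 ⟨fun h => (h ▸ hTP).not_subset (singleton_subset_iff.2 hiT), ?_⟩
      exact mem_ballsThrough.2 ⟨hd.isBall_parentB hTu, hd.mem_parentB_self hT hiT hTu⟩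
    · rw [mem_coe, mem_erase, mem_ballsThrough] at hB
      exact hd.exists_parentB_eq hB.2.1 hB.2.2 hB.1
  have huniv := sum_erase_add _ G (mem_ballsThrough.2 ⟨hd.isBall_univ i, mem_univ i⟩)
  have hsingle := sum_erase_add _ G
    (mem_ballsThrough.2 ⟨hd.isBall_singleton i, mem_singleton_self i⟩)
  rw [sum_sub_distrib, hparent, sub_eq_sub_iff_add_eq_add, huniv, add_comm, hsingle]

lemma sball_self_subset_iff (hi : ({i} : Finset X) ≠ univ) {T : Finset X} (hT : IsBall d T) :
    sball d i i ⊆ T ↔ i ∈ T ∧ T ≠ {i} := by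
  have hsingle := hd.ssubset_parentB (hd.isBall_singleton i) (mem_singleton_self i) hi
  rw [sball_self_eq_parentB]
  refine ⟨fun h => ⟨h (hsingle.subset (mem_singleton_self i)),
    fun hTi => hsingle.not_subset (hTi ▸ h)⟩, fun ⟨hiT, hTi⟩ => ?_⟩
  exact hd.parentB_subset (mem_singleton_self i) hT
    (ssubset_of_subset_of_ne (singleton_subset_iff.2 hiT) (Ne.symm hTi))

lemma sum_erase_univ_ballsThrough {M : Type*} [AddCommMonoid M]
    (hi : ({i} : Finset X) ≠ univ) (F : Finset X → M) :
    ∑ T ∈ (ballsThrough d i).erase univ, F T = F {i} +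
      ∑ T ∈ univ.filter (fun T : Finset X => IsBall d T ∧ sball d i i ⊆ T ∧ T ≠ univ), F T := by
  have hmem : {i} ∈ (ballsThrough d i).erase univ :=
    mem_erase.2 ⟨hi, mem_ballsThrough.2 ⟨hd.isBall_singleton i, mem_singleton_self i⟩⟩
  rw [← add_sum_erase _ F hmem]
  congr 2
  ext T
  simp only [mem_erase, mem_ballsThrough, mem_filter, mem_univ, true_and]
  constructor
  · rintro ⟨hTi, hTu, hT, hiT⟩
    exact ⟨hT, (hd.sball_self_subset_iff hi hT).2 ⟨hiT, hTi⟩, hTu⟩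
  · rintro ⟨hT, hsub, hTu⟩
    obtain ⟨hiT, hTi⟩ := (hd.sball_self_subset_iff hi hT).1 hsub
    exact ⟨hTi, hTu, hT, hiT⟩

end IsUltrametric

end Chain

section Spectrum

variable {X : Type*} [Fintype X] [DecidableEq X] {d : X → X → ℝ} {k : ℝ → ℝ} {m : X → ℝ}

lemma ultraLap_mulVec_apply (f : X → ℝ) (x : X) :
    (ultraLap d k m *ᵥ f) x = ∑ y, k (d x y) * m y * (f y - f x) := by
  rw [Matrix.mulVec, dotProduct, ← sum_compl_add_sum {x},
    ← sum_compl_add_sum {x} fun y => k (d x y) * m y * (f y - f x)]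
  have hoff : ∀ y ∈ ({x}ᶜ : Finset X), ultraLap d k m x y * f y = k (d x y) * m y * f y :=
    fun y hy => by rw [ultraLap, if_neg (by simpa using hy)]
  rw [sum_congr rfl hoff]
  simp only [sum_singleton, ultraLap, if_pos, sub_self, add_zero, mul_sub,
    sum_sub_distrib, sum_mul, neg_mul]
  ring

lemma ultraLap_mulVec_const (c : ℝ) : ultraLap d k m *ᵥ (fun _ => c) = 0 := by
  ext x
  simp [ultraLap_mulVec_apply]

noncomputable def normIndicator (m : X → ℝ) (B : Finset X) : X → ℝ :=
  fun x => if x ∈ B then (mass m B)⁻¹ else 0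

namespace IsUltrametric

variable (hd : IsUltrametric d) {B : Finset X} {i : X}
include hd

lemma ultraLap_mulVec_normIndicator (hB : IsBall d B) (hi : i ∈ B) (hmB : mass m B ≠ 0)
    (x : X) : (ultraLap d k m *ᵥ normIndicator m B) x =
      if x ∈ B then -(∑ y ∈ Bᶜ, k (d i y) * m y) / mass m B else k (d i x) := by
  rw [ultraLap_mulVec_apply, ← sum_compl_add_sum B]
  by_cases hx : x ∈ B
  · have hin : ∀ y ∈ B, k (d x y) * m y * (normIndicator m B y - normIndicator m B x) = 0 :=
      fun y hy => by simp [normIndicator, hx, hy]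
    have hout : ∀ y ∈ Bᶜ, k (d x y) * m y * (normIndicator m B y - normIndicator m B x)
        = k (d i y) * m y * -(mass m B)⁻¹ := fun y hy => by
      rw [mem_compl] at hy
      simp [normIndicator, hx, hy, hd.dist_eq_of_mem_of_notMem hB hi hx hy]
    rw [sum_eq_zero hin, sum_congr rfl hout, if_pos hx, ← sum_mul]
    ring
  · have hin : ∀ y ∈ B, k (d x y) * m y * (normIndicator m B y - normIndicator m B x)
        = k (d i x) * (mass m B)⁻¹ * m y := fun y hy => by
      simp only [normIndicator, if_pos hy, if_neg hx, sub_zero, hd.symm x y,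
        hd.dist_eq_of_mem_of_notMem hB hi hy hx]
      ring
    have hout : ∀ y ∈ Bᶜ, k (d x y) * m y * (normIndicator m B y - normIndicator m B x) = 0 :=
      fun y hy => by simp [normIndicator, hx, mem_compl.1 hy]
    rw [sum_eq_zero hout, sum_congr rfl hin, if_neg hx, ← mul_sum, zero_add, ← mass]
    field_simp

lemma sum_compl_eq_sum_compl_parentB_add (hB : IsBall d B) (hi : i ∈ B) (hBu : B ≠ univ) :
    ∑ y ∈ Bᶜ, k (d i y) * m y = ∑ y ∈ (parentB d B i)ᶜ, k (d i y) * m y +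
      k (parentR d B i) * (mass m (parentB d B i) - mass m B) := by
  have hsub := (hd.ssubset_parentB hB hi hBu).subset
  have hring : ∀ y ∈ parentB d B i \ B, k (d i y) * m y = k (parentR d B i) * m y :=
    fun y hy => by rw [hd.dist_eq_parentR hB hi hi (mem_sdiff.1 hy).1 (mem_sdiff.1 hy).2]
  rw [← sum_sdiff (compl_subset_compl.2 hsub), compl_sdiff_compl, sum_congr rfl hring, mass,
    mass, ← sum_sdiff hsub, ← mul_sum]
  ring

theorem ultraLap_mulVec_normIndicator_sub_parentB (hm : ∀ x, 0 < m x) (hB : IsBall d B)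
    (hi : i ∈ B) (hBu : B ≠ univ) :
    ultraLap d k m *ᵥ (normIndicator m B - normIndicator m (parentB d B i)) =
      lamB d k m (parentB d B i) i • (normIndicator m B - normIndicator m (parentB d B i)) := by
  have hBP := hd.ssubset_parentB hB hi hBu
  have hmB := mass_pos hm hi
  have hiP := hd.mem_parentB_self hB hi hBu
  have hmP := mass_pos hm hiP
  ext x
  rw [mulVec_sub, Pi.sub_apply, hd.ultraLap_mulVec_normIndicator hB hi hmB.ne',
    hd.ultraLap_mulVec_normIndicator (hd.isBall_parentB hBu) hiP hmP.ne',
    Pi.smul_apply, smul_eq_mul, lamB, hd.fdiam_parentB hB hi hBu,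
    hd.sum_compl_eq_sum_compl_parentB_add hB hi hBu]
  simp only [normIndicator, Pi.sub_apply]
  by_cases hxB : x ∈ B
  · rw [if_pos hxB, if_pos (hBP.subset hxB), if_pos hxB, if_pos (hBP.subset hxB)]
    field_simp
    ring
  by_cases hxP : x ∈ parentB d B i
  · rw [if_neg hxB, if_pos hxP, if_neg hxB, if_pos hxP, hd.dist_eq_parentR hB hi hi hxP hxB]
    field_simp
    ring
  · rw [if_neg hxB, if_neg hxP, if_neg hxB, if_neg hxP]
    ring

lemma lamB_neg (hm : ∀ x, 0 < m x) (hk : ∀ a b, 0 ≤ a → a ≤ b → k b ≤ k a)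
    (hgap : 0 < k (fdiam d univ)) {x : X} (hx : x ∈ B) : lamB d k m B x < 0 := by
  have hkpos : ∀ r, 0 ≤ r → r ≤ fdiam d univ → 0 < k r :=
    fun r h0 hr => hgap.trans_le (hk r _ h0 hr)
  have hout : 0 ≤ ∑ y ∈ Bᶜ, k (d x y) * m y := sum_nonneg fun y _ =>
    mul_nonneg (hkpos _ (hd.dist_nonneg x y) (le_fdiam (mem_univ x) (mem_univ y))).le (hm y).le
  have hin : 0 < k (fdiam d B) * mass m B :=
    mul_pos (hkpos _ (hd.fdiam_nonneg B) (hd.fdiam_mono (subset_univ B))) (mass_pos hm hx)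
  rw [lamB]
  linarith

end IsUltrametric

end Spectrum

theorem Matrix.exp_mulVec_of_mulVec_eq_smul {n : Type*} [Fintype n] [DecidableEq n]
    {A : Matrix n n ℝ} {v : n → ℝ} {c : ℝ} (h : A *ᵥ v = c • v) :
    NormedSpace.exp A *ᵥ v = Real.exp c • v := by
  -- any normed algebra structure inducing the product topology gives the same `exp`
  let : NormedRing (Matrix n n ℝ) := Matrix.linftyOpNormedRing
  let : NormedAlgebra ℝ (Matrix n n ℝ) := Matrix.linftyOpNormedAlgebra
  have hpow (j : ℕ) : A ^ j *ᵥ v = c ^ j • v := by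
    induction j with
    | zero => simp
    | succ j ih => rw [pow_succ', ← mulVec_mulVec, ih, mulVec_smul, h, smul_smul, pow_succ]
  have hA := (NormedSpace.exp_series_hasSum_exp' (𝕂 := ℝ) A).map
    (mulVec.addMonoidHomLeft v) (continuous_id.matrix_mulVec continuous_const)
  have hc := (NormedSpace.exp_series_hasSum_exp' (𝕂 := ℝ) c).smul_const v
  rw [← Real.exp_eq_exp_ℝ] at hc
  refine hA.unique (hc.congr_fun fun j => ?_)
  change ((j.factorial : ℝ)⁻¹ • A ^ j) *ᵥ v = _
  rw [smul_mulVec, hpow, smul_smul, smul_eq_mul]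

section HeatKernel

variable {X : Type*} [Fintype X] [DecidableEq X] {d : X → X → ℝ} {k : ℝ → ℝ} {m : X → ℝ}

lemma mulVec_normIndicator_singleton_apply (A : Matrix X X ℝ) (i : X) :
    (A *ᵥ normIndicator m {i}) i = A i i / m i := by
  simp [Matrix.mulVec, dotProduct, normIndicator, mass, div_eq_mul_inv]

lemma normIndicator_univ (hprob : ∑ x, m x = 1) : normIndicator m univ = fun _ => 1 := by
  ext x
  simp [normIndicator, mass, hprob]

theorem IsUltrametric.exp_smul_ultraLap_apply_self (hd : IsUltrametric d) (hm : ∀ x, 0 < m x)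
    (hprob : ∑ x, m x = 1) (t : ℝ) (i : X) :
    NormedSpace.exp (t • ultraLap d k m) i i / m i - 1 =
      ∑ T ∈ (ballsThrough d i).erase univ, ((mass m T)⁻¹ - (mass m (parentB d T i))⁻¹) *
        Real.exp (lamB d k m (parentB d T i) i * t) := by
  set E := NormedSpace.exp (t • ultraLap d k m)
  set v : Finset X → X → ℝ := fun T => normIndicator m T - normIndicator m (parentB d T i)
  have hdecomp : normIndicator m {i} = ∑ T ∈ (ballsThrough d i).erase univ, v T + fun _ => 1 := by
    rw [hd.sum_sub_parentB (normIndicator m), normIndicator_univ hprob, sub_add_cancel]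
  have hconst : E *ᵥ (fun _ => 1) = fun _ => 1 := by
    simpa using exp_mulVec_of_mulVec_eq_smul (A := t • ultraLap d k m) (c := 0)
      (by rw [smul_mulVec, ultraLap_mulVec_const, smul_zero, zero_smul])
  have heigen : ∀ T ∈ (ballsThrough d i).erase univ,
      E *ᵥ v T = Real.exp (lamB d k m (parentB d T i) i * t) • v T := by
    intro T hT
    obtain ⟨hTu, hT, hiT⟩ : T ≠ univ ∧ IsBall d T ∧ i ∈ T := by simpa using hT
    refine exp_mulVec_of_mulVec_eq_smul ?_
    rw [smul_mulVec, hd.ultraLap_mulVec_normIndicator_sub_parentB hm hT hiT hTu, smul_smul,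
      mul_comm]
  have hvi : ∀ T ∈ (ballsThrough d i).erase univ,
      v T i = (mass m T)⁻¹ - (mass m (parentB d T i))⁻¹ := by
    intro T hT
    obtain ⟨hTu, hT, hiT⟩ : T ≠ univ ∧ IsBall d T ∧ i ∈ T := by simpa using hT
    simp [v, normIndicator, hiT, hd.mem_parentB_self hT hiT hTu]
  have h := congrFun (congrArg (E *ᵥ ·) hdecomp) i
  rw [mulVec_normIndicator_singleton_apply, mulVec_add, hconst, mulVec_sum, sum_congr rfl heigen,
    Pi.add_apply, Finset.sum_apply] at h
  rw [h, add_sub_cancel_right]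
  refine sum_congr rfl fun T hT => ?_
  rw [Pi.smul_apply, smul_eq_mul, hvi T hT, mul_comm]

end HeatKernel

lemma integrableOn_sum_mul_exp_Ioi {ι : Type*} (s : Finset ι) (c a : ι → ℝ)
    (ha : ∀ j ∈ s, a j < 0) :
    MeasureTheory.IntegrableOn (fun t => ∑ j ∈ s, c j * Real.exp (a j * t)) (Set.Ioi 0) :=
  MeasureTheory.integrable_finsetSum _ fun j hj =>
    (integrableOn_exp_mul_Ioi (ha j hj) 0).const_mul (c j)

lemma integral_sum_mul_exp_Ioi {ι : Type*} (s : Finset ι) (c a : ι → ℝ)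
    (ha : ∀ j ∈ s, a j < 0) :
    ∫ t in Set.Ioi (0 : ℝ), ∑ j ∈ s, c j * Real.exp (a j * t) = ∑ j ∈ s, -(a j)⁻¹ * c j := by
  rw [MeasureTheory.integral_finsetSum _ fun j hj =>
    (integrableOn_exp_mul_Ioi (ha j hj) 0).const_mul (c j)]
  refine sum_congr rfl fun j hj => ?_
  rw [MeasureTheory.integral_const_mul, integral_exp_mul_Ioi (ha j hj), mul_zero, Real.exp_zero]
  ring

/-- Closed form for the relaxation time entering the CTMC
centrality: `∫₀^∞ (H_t(i,i) − 1) dt` converges and equals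
`−(1/λ(B₀))(1/m(i) − 1/m(B₀)) + Σ_{B₀ ⊆ T ⊊ X} (−1/λ(T⁺))(1/m(T) − 1/m(T⁺))`,
where `B₀` is the smallest ball containing `i` with at least two elements. -/
theorem stmt18 {X : Type*} [Fintype X] [DecidableEq X]
    (hX : 1 < Fintype.card X)
    (d : X → X → ℝ)
    (hd0 : ∀ x y, d x y = 0 ↔ x = y)
    (hsymm : ∀ x y, d x y = d y x)
    (hultra : ∀ x y z, d x z ≤ max (d x y) (d y z))
    (m : X → ℝ) (hm : ∀ x, 0 < m x) (k : ℝ → ℝ)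
    (hk : ∀ a b, 0 ≤ a → a ≤ b → k b ≤ k a)
    (hgap : 0 < k (fdiam d Finset.univ))
    (hprob : ∑ x, m x = 1)
    (i : X) :
    MeasureTheory.IntegrableOn
      (fun t : ℝ => (NormedSpace.exp (t • ultraLap d k m)) i i / m i - 1)
      (Set.Ioi 0) ∧
    (∫ t in Set.Ioi (0 : ℝ),
        ((NormedSpace.exp (t • ultraLap d k m)) i i / m i - 1)) =
      -(lamB d k m (sball d i i) i)⁻¹ * ((m i)⁻¹ - (mass m (sball d i i))⁻¹) +
      ∑ T ∈ Finset.univ.filter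
          (fun T : Finset X => IsBall d T ∧ sball d i i ⊆ T ∧ T ≠ Finset.univ),
        (-(lamB d k m (parentB d T i) i)⁻¹) *
          ((mass m T)⁻¹ - (mass m (parentB d T i))⁻¹) := by
  have hd : IsUltrametric d := ⟨hd0, hsymm, hultra⟩
  have hi : ({i} : Finset X) ≠ univ := fun h => by
    obtain ⟨j, hj⟩ := Fintype.exists_ne_of_one_lt_card hX i
    exact hj (mem_singleton.1 (h ▸ mem_univ j))
  have hneg : ∀ T ∈ (ballsThrough d i).erase univ, lamB d k m (parentB d T i) i < 0 := by
    intro T hT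
    obtain ⟨hTu, hT, hiT⟩ : T ≠ univ ∧ IsBall d T ∧ i ∈ T := by simpa using hT
    exact hd.lamB_neg hm hk hgap (hd.mem_parentB_self hT hiT hTu)
  simp only [hd.exp_smul_ultraLap_apply_self hm hprob]
  refine ⟨integrableOn_sum_mul_exp_Ioi _ _ _ hneg, ?_⟩
  rw [integral_sum_mul_exp_Ioi _ _ _ hneg, hd.sum_erase_univ_ballsThrough hi,
    sball_self_eq_parentB, mass, sum_singleton]
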